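/- Assume Hypotheses (H). Fix t ∈ I and λ > max(M_{{t}}, λ_{{t}}), where M_{{t}} := max_k sup_{x∈ℝ^d} Σ_j c^P_{kj}(t,x) and λ_{{t}} is the constant from Hypothesis (H)(iii) for the interval J = {t}. If u : ℝ^d → ℝ^m is bounded, twice continuously differentiable and satisfies λ u(x) − (𝒜^P(t)u)(x) ≤ 0 componentwise for every x ∈ ℝ^d, then u(x) ≤ 0 componentwise for every x ∈ ℝ^d. -/

import Mathlib

open Set Filter Metric MeasureTheory
open scoped BigOperators Topology

noncomputable section

/-- Euclidean space `ℝ^d`. -/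
abbrev Euc (d : ℕ) := EuclideanSpace ℝ (Fin d)

variable {d m : ℕ}

/-- First-order spatial partial derivative. -/
def pd (i : Fin d) (f : Euc d → ℝ) (x : Euc d) : ℝ :=
  fderiv ℝ f x (EuclideanSpace.single i 1)

/-- Second-order spatial partial derivative. -/
def pd2 (i j : Fin d) (f : Euc d → ℝ) (x : Euc d) : ℝ :=
  fderiv ℝ (fun y => pd j f y) x (EuclideanSpace.single i 1)

/-- The weakly coupled elliptic operator `𝒜(t)` with diffusion coefficients `Q`,
drift coefficients `b` and potential matrix `c`, acting on `ζ : ℝ^d → ℝ^m`. -/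
def opA (Q : Fin m → ℝ → Euc d → Fin d → Fin d → ℝ)
    (b : Fin m → ℝ → Euc d → Fin d → ℝ)
    (c : ℝ → Euc d → Fin m → Fin m → ℝ)
    (t : ℝ) (ζ : Euc d → Fin m → ℝ) (x : Euc d) (k : Fin m) : ℝ :=
  (∑ i, ∑ j, Q k t x i j * pd2 i j (fun y => ζ y k) x)
    + (∑ j, b k t x j * pd j (fun y => ζ y k) x)
    + (∑ h, c t x k h * ζ x h)

/-- The matrix `C^P`: diagonal entries of `C`, absolute values off the diagonal. -/
def CP (c : ℝ → Euc d → Fin m → Fin m → ℝ) :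
    ℝ → Euc d → Fin m → Fin m → ℝ :=
  fun t x k h => if k = h then c t x k h else |c t x k h|

/-- Smallest eigenvalue of a (symmetric) matrix, via the Rayleigh quotient. -/
def minEig (A : Fin d → Fin d → ℝ) : ℝ :=
  sInf {r : ℝ | ∃ ξ : Euc d, ‖ξ‖ = 1 ∧ r = ∑ i, ∑ j, A i j * ξ i * ξ j}

/-- Local parabolic `(α/2, α)`-Hölder continuity on `I × ℝ^d`. -/
def LocParHolder {F : Type*} [NormedAddCommGroup F] (α : ℝ) (I : Set ℝ)
    (f : ℝ → Euc d → F) : Prop :=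
  ∀ K : Set (ℝ × Euc d), K ⊆ I ×ˢ (univ : Set (Euc d)) → IsCompact K →
    ∃ L : ℝ, ∀ p ∈ K, ∀ q ∈ K,
      ‖f p.1 p.2 - f q.1 q.2‖ ≤ L * (|p.1 - q.1| ^ (α / 2) + ‖p.2 - q.2‖ ^ α)

/-- `I` is a right half-line (possibly all of `ℝ`). -/
def IsRightHalfline (I : Set ℝ) : Prop := (∃ a, I = Ici a) ∨ I = univ

/-- Hypotheses (H). -/
structure Hyp (I : Set ℝ)
    (Q : Fin m → ℝ → Euc d → Fin d → Fin d → ℝ)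
    (b : Fin m → ℝ → Euc d → Fin d → ℝ)
    (c : ℝ → Euc d → Fin m → Fin m → ℝ) : Prop where
  symm : ∀ k t x i j, Q k t x i j = Q k t x j i
  holder : ∃ α ∈ Ioo (0:ℝ) 1,
      (∀ k i j, LocParHolder α I (fun t x => Q k t x i j)) ∧
      (∀ k j, LocParHolder α I (fun t x => b k t x j)) ∧
      (∀ k h, LocParHolder α I (fun t x => c t x k h))
  ellipt : ∀ J : Set ℝ, J ⊆ I → Bornology.IsBounded J →
      ∀ k, ∃ μ0 > 0, ∀ t ∈ J, ∀ x : Euc d, μ0 ≤ minEig (Q k t x)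
  lyap : ∀ J : Set ℝ, J ⊆ I → Bornology.IsBounded J →
      ∃ φ : Euc d → Fin m → ℝ, ∃ lam > 0,
        (∀ k, ContDiff ℝ 2 (fun x => φ x k)) ∧
        (∀ x k, 0 < φ x k) ∧
        (∀ k, Tendsto (fun x => φ x k) (cocompact (Euc d)) atTop) ∧
        (∀ t ∈ J, ∀ x k, opA Q b (CP c) t φ x k ≤ lam * φ x k)
  irred : ¬ ∃ K : Set (Fin m), K.Nonempty ∧ K ≠ univ ∧
      ∀ i ∈ K, ∀ j ∉ K, ∀ t ∈ I, ∀ x : Euc d, c t x i j = 0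
  rowBdd : ∀ J : Set ℝ, J ⊆ I → Bornology.IsBounded J →
      ∃ M : ℝ, ∀ t ∈ J, ∀ x : Euc d, ∀ k, (∑ j, CP c t x k j) ≤ M

/-- `f` is bounded and continuous (membership in `C_b(ℝ^d; ℝ^m)`). -/
def IsBddContinuous (f : Euc d → Fin m → ℝ) : Prop :=
  Continuous f ∧ ∃ F, ∀ x k, |f x k| ≤ F

/-- Classical solution of the Cauchy problem for the operator with coefficients
`Q, b, c`, datum `f` at time `s`. -/
def ClassicalSol (Q : Fin m → ℝ → Euc d → Fin d → Fin d → ℝ)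
    (b : Fin m → ℝ → Euc d → Fin d → ℝ)
    (c : ℝ → Euc d → Fin m → Fin m → ℝ)
    (s : ℝ) (f : Euc d → Fin m → ℝ) (u : ℝ → Euc d → Fin m → ℝ) : Prop :=
  ContinuousOn (fun p : ℝ × Euc d => u p.1 p.2) (Ici s ×ˢ (univ : Set (Euc d))) ∧
  (∀ x, u s x = f x) ∧
  (∀ t ∈ Ioi s, ∀ k, ContDiff ℝ 2 (fun x => u t x k)) ∧
  (∀ t ∈ Ioi s, ∀ x k, HasDerivAt (fun r => u r x k) (opA Q b c t (u t) x k) t)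

/-- Bounded on every strip `[s,T] × ℝ^d`. -/
def BddOnStrips (s : ℝ) (u : ℝ → Euc d → Fin m → ℝ) : Prop :=
  ∀ T > s, ∃ K, ∀ t ∈ Icc s T, ∀ x k, |u t x k| ≤ K

/-! Suppose `u` is positive somewhere. Since `u` is bounded and the Lyapunov function `φ` blows
up at infinity, `v = u - ε φ` (with `ε` small) attains a positive maximum over `ℝ^d × {1,…,m}`
at some `(x₀, k₀)`. There `∇v_{k₀} = 0`, `D²v_{k₀} ≤ 0`, hence `Tr(Q^{k₀} D²v_{k₀}) ≤ 0` as
`Q^{k₀}` is positive semidefinite, and since `C^P` is nonnegative off the diagonal,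
`∑_h c^P_{k₀h} v_h ≤ M v_{k₀}`. So `(𝒜^P v)_{k₀}(x₀) ≤ M v_{k₀}(x₀)`, whereas the hypotheses give
`(𝒜^P v)_{k₀} ≥ λ u_{k₀} - ε λ_t φ_{k₀} = λ v_{k₀} + ε (λ - λ_t) φ_{k₀} > M v_{k₀}` there. -/

section Hessian

open Matrix

theorem Matrix.PosSemidef.sum_mul_nonpos {n : Type*} [Fintype n] {Q H : Matrix n n ℝ}
    (hQ : Q.PosSemidef) (hH : ∀ x, x ⬝ᵥ H *ᵥ x ≤ 0) : ∑ i, ∑ j, Q i j * H i j ≤ 0 := by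
  obtain ⟨r, v, rfl⟩ := posSemidef_iff_eq_sum_vecMulVec.mp hQ
  calc ∑ i, ∑ j, (∑ k, vecMulVec (v k) (star (v k))) i j * H i j
      = ∑ k, v k ⬝ᵥ H *ᵥ v k := by
        simp only [Matrix.sum_apply, vecMulVec_apply, star_trivial, dotProduct, mulVec,
          Finset.sum_mul, Finset.mul_sum]
        rw [Finset.sum_congr rfl fun _ _ => Finset.sum_comm, Finset.sum_comm]
        exact Finset.sum_congr rfl fun k _ => Finset.sum_congr rfl fun i _ =>
          Finset.sum_congr rfl fun j _ => by ring
    _ ≤ 0 := Finset.sum_nonpos fun k _ => hH (v k)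

theorem minEig_le_of_norm_eq_one (A : Fin d → Fin d → ℝ) {ξ : Euc d} (hξ : ‖ξ‖ = 1) :
    minEig A ≤ ∑ i, ∑ j, A i j * ξ i * ξ j := by
  obtain ⟨B, hB⟩ := (isCompact_sphere (0 : Euc d) 1).bddBelow_image
    (f := fun ξ : Euc d => ∑ i, ∑ j, A i j * ξ i * ξ j) (by fun_prop : Continuous _).continuousOn
  refine csInf_le ⟨B, ?_⟩ ⟨ξ, hξ, rfl⟩
  rintro _ ⟨η, hη, rfl⟩
  exact hB ⟨η, by simpa using hη, rfl⟩

theorem Matrix.posSemidef_of_minEig_nonneg {A : Matrix (Fin d) (Fin d) ℝ} (hA : A.IsSymm)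
    (h : 0 ≤ minEig A) : A.PosSemidef := by
  refine .of_dotProduct_mulVec_nonneg (isHermitian_iff_isSymm.mpr hA) fun x => ?_
  set ξ : Euc d := WithLp.toLp 2 x
  have hquad : ∀ c : ℝ, ∑ i, ∑ j, A i j * (c • ξ) i * (c • ξ) j
      = c ^ 2 * (star x ⬝ᵥ A *ᵥ x) := fun c => by
    simp only [ξ, PiLp.smul_apply, smul_eq_mul, star_trivial, dotProduct, mulVec, Finset.mul_sum]
    exact Finset.sum_congr rfl fun i _ => Finset.sum_congr rfl fun j _ => by ring
  rcases eq_or_ne ξ 0 with hξ | hξ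
  · simp [show x = 0 from congrArg WithLp.ofLp hξ]
  have hunit := minEig_le_of_norm_eq_one A (norm_smul_inv_norm (𝕜 := ℝ) hξ)
  rw [hquad, RCLike.ofReal_real_eq_id, id] at hunit
  have hnorm : 0 < ‖ξ‖⁻¹ ^ 2 := by positivity
  nlinarith

theorem IsLocalMax.deriv_deriv_nonpos {g : ℝ → ℝ} {a : ℝ} (h : IsLocalMax g a)
    (hc : ContinuousAt g a) : deriv (deriv g) a ≤ 0 := by
  by_contra! hpos
  have hmin := isLocalMin_of_deriv_deriv_pos hpos h.deriv_eq_zero hc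
  have hconst : g =ᶠ[𝓝 a] fun _ => g a :=
    (h.and hmin).mono fun x hx => le_antisymm hx.1 hx.2
  exact hpos.ne' (by simp [hconst.deriv.deriv_eq])

theorem IsLocalMax.fderiv_fderiv_apply_self_nonpos {E : Type*} [NormedAddCommGroup E]
    [NormedSpace ℝ E] {f : E → ℝ} {x : E} (h : IsLocalMax f x) (hf : Differentiable ℝ f)
    (hf' : DifferentiableAt ℝ (fderiv ℝ f) x) (v : E) : fderiv ℝ (fderiv ℝ f) x v v ≤ 0 := by
  have hline : ∀ s : ℝ, HasDerivAt (fun s : ℝ => x + s • v) v s := fun s => by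
    simpa using ((hasDerivAt_id s).smul_const v).const_add x
  have hmax : IsLocalMax (fun s : ℝ => f (x + s • v)) 0 :=
    IsLocalMax.comp_continuous (g := fun s : ℝ => x + s • v) (by simpa using h)
      (hline 0).continuousAt
  have hderiv : deriv (fun s : ℝ => f (x + s • v)) = fun s => fderiv ℝ f (x + s • v) v :=
    funext fun s => ((hf _).hasFDerivAt.comp_hasDerivAt s (hline s)).deriv
  have hderiv2 : HasDerivAt (fun s : ℝ => fderiv ℝ f (x + s • v) v)
      (fderiv ℝ (fderiv ℝ f) x v v) 0 := by
    have hf'' : HasFDerivAt (fderiv ℝ f) (fderiv ℝ (fderiv ℝ f) x) (x + (0 : ℝ) • v) := by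
      simpa using hf'.hasFDerivAt
    have h1 : HasDerivAt (fun s : ℝ => fderiv ℝ f (x + s • v)) (fderiv ℝ (fderiv ℝ f) x v) 0 :=
      hf''.comp_hasDerivAt 0 (hline 0)
    simpa using h1.clm_apply (hasDerivAt_const (0 : ℝ) v)
  rw [← hderiv2.deriv, ← hderiv]
  exact hmax.deriv_deriv_nonpos (hf.continuous.comp (by fun_prop)).continuousAt

def hessian (f : Euc d → ℝ) (x : Euc d) : Matrix (Fin d) (Fin d) ℝ :=
  Matrix.of fun i j => pd2 i j f x

theorem pd2_eq_fderiv_fderiv {f : Euc d → ℝ} {x : Euc d}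
    (hf : DifferentiableAt ℝ (fderiv ℝ f) x) (i j : Fin d) :
    pd2 i j f x = fderiv ℝ (fderiv ℝ f) x (EuclideanSpace.single i 1)
      (EuclideanSpace.single j 1) := by
  unfold pd2 pd
  rw [fderiv_clm_apply hf (differentiableAt_const _)]
  simp

theorem dotProduct_hessian_mulVec {f : Euc d → ℝ} {x : Euc d}
    (hf : DifferentiableAt ℝ (fderiv ℝ f) x) (ξ : Fin d → ℝ) :
    ξ ⬝ᵥ hessian f x *ᵥ ξ = fderiv ℝ (fderiv ℝ f) x (WithLp.toLp 2 ξ) (WithLp.toLp 2 ξ) := by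
  have hexp : WithLp.toLp 2 ξ = ∑ i, ξ i • EuclideanSpace.single i (1 : ℝ) := by
    simpa using ((EuclideanSpace.basisFun (Fin d) ℝ).sum_repr (WithLp.toLp 2 ξ)).symm
  rw [hexp]
  simp only [dotProduct, mulVec, hessian, pd2_eq_fderiv_fderiv hf, of_apply, Finset.mul_sum,
    map_sum, map_smul, _root_.sum_apply, _root_.smul_apply, smul_eq_mul]
  rw [Finset.sum_comm]
  exact Finset.sum_congr rfl fun i _ => Finset.sum_congr rfl fun j _ => by ring

theorem IsLocalMax.dotProduct_hessian_mulVec_nonpos {f : Euc d → ℝ} {x : Euc d}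
    (h : IsLocalMax f x) (hf : ContDiff ℝ 2 f) (ξ : Fin d → ℝ) :
    ξ ⬝ᵥ hessian f x *ᵥ ξ ≤ 0 := by
  have hf' : Differentiable ℝ (fderiv ℝ f) :=
    (hf.fderiv_right (by norm_num)).differentiable one_ne_zero
  rw [dotProduct_hessian_mulVec (hf' x)]
  exact h.fderiv_fderiv_apply_self_nonpos (hf.differentiable (by norm_num)) (hf' x) _

end Hessian

theorem IsLocalMax.pd_eq_zero {f : Euc d → ℝ} {x : Euc d} (h : IsLocalMax f x) (j : Fin d) :
    pd j f x = 0 := by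
  simp [pd, h.fderiv_eq_zero]

theorem pd_sub_const_mul {f g : Euc d → ℝ} {x : Euc d} (hf : DifferentiableAt ℝ f x)
    (hg : DifferentiableAt ℝ g x) (ε : ℝ) (j : Fin d) :
    pd j (fun y => f y - ε * g y) x = pd j f x - ε * pd j g x := by
  simp [pd, fderiv_fun_sub hf (hg.const_mul ε), fderiv_const_mul hg ε]

theorem pd2_sub_const_mul {f g : Euc d → ℝ} (hf : ContDiff ℝ 2 f) (hg : ContDiff ℝ 2 g)
    (ε : ℝ) (i j : Fin d) (x : Euc d) :
    pd2 i j (fun y => f y - ε * g y) x = pd2 i j f x - ε * pd2 i j g x := by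
  have hd : ∀ {f : Euc d → ℝ}, ContDiff ℝ 2 f → Differentiable ℝ f := fun hf =>
    hf.differentiable (by norm_num)
  have hpd : ∀ {f : Euc d → ℝ}, ContDiff ℝ 2 f → Differentiable ℝ (pd j f) := fun hf =>
    ((hf.fderiv_right (by norm_num)).clm_apply contDiff_const).differentiable one_ne_zero
  have hpd_sub : pd j (fun y => f y - ε * g y) = fun y => pd j f y - ε * pd j g y :=
    funext fun y => pd_sub_const_mul (hd hf y) (hd hg y) ε j
  simp only [pd2, hpd_sub]
  exact pd_sub_const_mul (hpd hf x) (hpd hg x) ε i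

theorem opA_sub_const_mul (Q : Fin m → ℝ → Euc d → Fin d → Fin d → ℝ)
    (b : Fin m → ℝ → Euc d → Fin d → ℝ) (c : ℝ → Euc d → Fin m → Fin m → ℝ) (t : ℝ)
    {u φ : Euc d → Fin m → ℝ} (hu : ∀ k, ContDiff ℝ 2 fun x => u x k)
    (hφ : ∀ k, ContDiff ℝ 2 fun x => φ x k) (ε : ℝ) (x : Euc d) (k : Fin m) :
    opA Q b c t (fun y h => u y h - ε * φ y h) x k
      = opA Q b c t u x k - ε * opA Q b c t φ x k := by
  simp only [opA, pd2_sub_const_mul (hu k) (hφ k),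
    pd_sub_const_mul ((hu k).differentiable (by norm_num) x)
      ((hφ k).differentiable (by norm_num) x),
    mul_sub, Finset.sum_sub_distrib, mul_left_comm _ ε, ← Finset.mul_sum]
  ring

theorem Finset.sum_mul_le_sum_mul_of_forall_le {ι : Type*} [Fintype ι] {a w : ι → ℝ} {k : ι}
    (ha : ∀ h ≠ k, 0 ≤ a h) (hw : ∀ h, w h ≤ w k) : ∑ h, a h * w h ≤ (∑ h, a h) * w k := by
  rw [Finset.sum_mul]
  refine Finset.sum_le_sum fun h _ => ?_
  rcases eq_or_ne h k with rfl | hne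
  · exact le_rfl
  · exact mul_le_mul_of_nonneg_left (hw h) (ha h hne)

theorem CP_nonneg_of_ne (c : ℝ → Euc d → Fin m → Fin m → ℝ) (t : ℝ) (x : Euc d) {k h : Fin m}
    (hne : h ≠ k) : 0 ≤ CP c t x k h := by
  simp [CP, hne.symm]

theorem opA_CP_le_of_forall_le {Q : Fin m → ℝ → Euc d → Fin d → Fin d → ℝ}
    {b : Fin m → ℝ → Euc d → Fin d → ℝ} {c : ℝ → Euc d → Fin m → Fin m → ℝ} {t M : ℝ}
    {v : Euc d → Fin m → ℝ} {x₀ : Euc d} {k₀ : Fin m}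
    (hQ : (Matrix.of (Q k₀ t x₀)).PosSemidef) (hv : ContDiff ℝ 2 fun x => v x k₀)
    (hmax : ∀ x k, v x k ≤ v x₀ k₀) (hpos : 0 ≤ v x₀ k₀) (hM : ∑ j, CP c t x₀ k₀ j ≤ M) :
    opA Q b (CP c) t v x₀ k₀ ≤ M * v x₀ k₀ := by
  have hloc : IsLocalMax (fun x => v x k₀) x₀ := .of_forall fun x => hmax x k₀
  have hdiffusion : ∑ i, ∑ j, Q k₀ t x₀ i j * pd2 i j (fun y => v y k₀) x₀ ≤ 0 :=
    hQ.sum_mul_nonpos (hloc.dotProduct_hessian_mulVec_nonpos hv)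
  have hdrift : ∑ j, b k₀ t x₀ j * pd j (fun y => v y k₀) x₀ = 0 := by
    simp [hloc.pd_eq_zero]
  have hcoupling : ∑ h, CP c t x₀ k₀ h * v x₀ h ≤ M * v x₀ k₀ :=
    (Finset.sum_mul_le_sum_mul_of_forall_le (fun h hne => CP_nonneg_of_ne c t x₀ hne)
      (fun h => hmax x₀ h)).trans (mul_le_mul_of_nonneg_right hM hpos)
  rw [opA]
  linarith

theorem exists_forall_le_of_tendsto_cocompact_atBot {X ι : Type*} [TopologicalSpace X]
    [Nonempty X] [Fintype ι] [Nonempty ι] {f : X → ι → ℝ} (hc : ∀ k, Continuous fun x => f x k)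
    (ht : ∀ k, Tendsto (fun x => f x k) (cocompact X) atBot) :
    ∃ x₀ k₀, ∀ x k, f x k ≤ f x₀ k₀ := by
  let g := fun x => Finset.univ.sup' Finset.univ_nonempty (f x)
  have hg : Continuous g := Continuous.finset_sup'_apply _ fun k _ => hc k
  have hgt : Tendsto g (cocompact X) atBot := tendsto_atBot.2 fun B =>
    (eventually_all.2 fun k => (ht k).eventually_le_atBot B).mono fun x hx =>
      Finset.sup'_le _ _ fun k _ => hx k
  obtain ⟨x₀, hx₀⟩ := hg.exists_forall_ge hgt
  obtain ⟨k₀, -, hk₀⟩ := Finset.exists_mem_eq_sup' Finset.univ_nonempty (f x₀)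
  exact ⟨x₀, k₀, fun x k => hk₀ ▸ (Finset.le_sup' (f x) (Finset.mem_univ k)).trans (hx₀ x)⟩

theorem statement_11_general {d m : ℕ}
    (I : Set ℝ)
    (Q : Fin m → ℝ → Euc d → Fin d → Fin d → ℝ)
    (b : Fin m → ℝ → Euc d → Fin d → ℝ)
    (c : ℝ → Euc d → Fin m → Fin m → ℝ)
    (hH : Hyp I Q b c)
    (t : ℝ) (ht : t ∈ I) (lam : ℝ)
    (hMlam : ∃ M : ℝ, (∀ x : Euc d, ∀ k, (∑ j, CP c t x k j) ≤ M) ∧ M < lam)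
    (hlamt : ∃ φ : Euc d → Fin m → ℝ, ∃ lamt > (0:ℝ),
      (∀ k, ContDiff ℝ 2 (fun x => φ x k)) ∧
      (∀ x k, 0 < φ x k) ∧
      (∀ k, Tendsto (fun x => φ x k) (cocompact (Euc d)) atTop) ∧
      (∀ x k, opA Q b (CP c) t φ x k ≤ lamt * φ x k) ∧ lamt < lam)
    (u : Euc d → Fin m → ℝ)
    (hu : ∀ k, ContDiff ℝ 2 (fun x => u x k))
    (hub : ∃ K, ∀ (x : Euc d) k, |u x k| ≤ K)
    (hineq : ∀ (x : Euc d) k, lam * u x k - opA Q b (CP c) t u x k ≤ 0) :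
    ∀ (x : Euc d) k, u x k ≤ 0 := by
  obtain ⟨M, hM, hMlam⟩ := hMlam
  obtain ⟨φ, lamt, -, hφ, hφpos, hφtend, hφA, hlamt⟩ := hlamt
  obtain ⟨K, hK⟩ := hub
  by_contra! ⟨x₁, k₁, hx₁⟩
  have : Nonempty (Fin m) := ⟨k₁⟩
  obtain ⟨ε, hε, hεφ⟩ := exists_pos_mul_lt hx₁ (φ x₁ k₁)
  set v := fun x k => u x k - ε * φ x k
  have hv : ∀ k, ContDiff ℝ 2 fun x => v x k := fun k => (hu k).sub (contDiff_const.mul (hφ k))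
  have hvtend : ∀ k, Tendsto (fun x => v x k) (cocompact (Euc d)) atBot := fun k => by
    simpa [v, sub_eq_add_neg] using tendsto_atBot_add_left_of_ge _ K
      (fun x => (abs_le.1 (hK x k)).2)
      (tendsto_neg_atTop_atBot.comp ((hφtend k).const_mul_atTop hε))
  obtain ⟨x₀, k₀, hmax⟩ :=
    exists_forall_le_of_tendsto_cocompact_atBot (fun k => (hv k).continuous) hvtend
  have hv₀ : 0 < v x₀ k₀ := (sub_pos.2 (by linarith)).trans_le (hmax x₁ k₁)
  have hQ : (Matrix.of (Q k₀ t x₀)).PosSemidef := by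
    obtain ⟨μ, hμ, hμQ⟩ := hH.ellipt {t} (by simpa using ht) Bornology.isBounded_singleton k₀
    exact Matrix.posSemidef_of_minEig_nonneg (Matrix.IsSymm.ext fun i j => hH.symm k₀ t x₀ j i)
      (hμ.le.trans (hμQ t rfl x₀))
  have key := opA_CP_le_of_forall_le (b := b) hQ (hv k₀) hmax hv₀.le (hM x₀ k₀)
  rw [opA_sub_const_mul Q b (CP c) t hu hφ] at key
  have hεφA := mul_le_mul_of_nonneg_left (hφA x₀ k₀) hε.le
  linarith [hineq x₀ k₀, mul_pos (sub_pos.2 hMlam) hv₀,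
    mul_pos (mul_pos hε (hφpos x₀ k₀)) (sub_pos.2 hlamt)]

/-- Proposition 4.4: maximum principle for the elliptic operator
`λ - 𝒜^P(t)`, for `λ > max(M_{t}, λ_{t})`.  The condition `λ > M_{t}` is expressed by the
existence of an upper bound `M < λ` for the row sums of `C^P(t,·)`; the condition
`λ > λ_{t}` by the existence of Lyapunov data for `J = {t}` with constant `< λ`. -/
theorem statement_11 {d m : ℕ} (hd : 1 ≤ d) (hm : 2 ≤ m)
    (I : Set ℝ) (hI : IsRightHalfline I)
    (Q : Fin m → ℝ → Euc d → Fin d → Fin d → ℝ)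
    (b : Fin m → ℝ → Euc d → Fin d → ℝ)
    (c : ℝ → Euc d → Fin m → Fin m → ℝ)
    (hH : Hyp I Q b c)
    (t : ℝ) (ht : t ∈ I) (lam : ℝ)
    (hMlam : ∃ M : ℝ, (∀ x : Euc d, ∀ k, (∑ j, CP c t x k j) ≤ M) ∧ M < lam)
    (hlamt : ∃ φ : Euc d → Fin m → ℝ, ∃ lamt > (0:ℝ),
      (∀ k, ContDiff ℝ 2 (fun x => φ x k)) ∧
      (∀ x k, 0 < φ x k) ∧
      (∀ k, Tendsto (fun x => φ x k) (cocompact (Euc d)) atTop) ∧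
      (∀ x k, opA Q b (CP c) t φ x k ≤ lamt * φ x k) ∧ lamt < lam)
    (u : Euc d → Fin m → ℝ)
    (hu : ∀ k, ContDiff ℝ 2 (fun x => u x k))
    (hub : ∃ K, ∀ (x : Euc d) k, |u x k| ≤ K)
    (hineq : ∀ (x : Euc d) k, lam * u x k - opA Q b (CP c) t u x k ≤ 0) :
    ∀ (x : Euc d) k, u x k ≤ 0 :=
  statement_11_general I Q b c hH t ht lam hMlam hlamt u hu hub hineq
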